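/- Let P and Q be product distributions over {0,1}^n with coordinate Bernoulli expectations p_i ∈ [0,1] and q_i ∈ (0, 1/2] respectively. If the total variation distance satisfies δ(P, Q) ≥ ε, then Σ_{i=1}^{n} (p_i − q_i)² / q_i ≥ ε²/2. -/
import Mathlib

/-- The total variation distance `δ(p,q) = (1/2)·∑ₖ |pₖ - qₖ|` between two
probability mass functions on a finite type. -/
noncomputable def tvDist {α : Type*} [Fintype α] (p q : α → ℝ) : ℝ :=
  (1 / 2) * ∑ k, |p k - q k|

/-- The product distribution over `{0,1}ⁿ` with Bernoulli parameters `r 0, …, r (n-1)`: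
it assigns to `x ∈ {0,1}ⁿ` the probability `∏ i, r i ^ (x i) * (1 - r i) ^ (1 - x i)`. -/
noncomputable def prodBern {n : ℕ} (r : Fin n → ℝ) : (Fin n → Bool) → ℝ :=
  fun x => ∏ i, if x i then r i else 1 - r i

private lemma one_sub_prod_le_sum {ι : Type*} (s : Finset ι) (a : ι → ℝ)
    (h0 : ∀ i ∈ s, 0 ≤ a i) (h1 : ∀ i ∈ s, a i ≤ 1) :
    1 - ∏ i ∈ s, a i ≤ ∑ i ∈ s, (1 - a i) := by
  induction s using Finset.cons_induction with
  | empty => simp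
  | cons j s hj ih =>
    rw [Finset.prod_cons, Finset.sum_cons]
    have hprod : ∏ i ∈ s, a i ≤ 1 :=
      Finset.prod_le_one (fun i hi => h0 i (Finset.mem_cons_of_mem hi))
        (fun i hi => h1 i (Finset.mem_cons_of_mem hi))
    have hprod0 : 0 ≤ ∏ i ∈ s, a i :=
      Finset.prod_nonneg fun i hi => h0 i (Finset.mem_cons_of_mem hi)
    have hih := ih (fun i hi => h0 i (Finset.mem_cons_of_mem hi))
      (fun i hi => h1 i (Finset.mem_cons_of_mem hi))
    have haj0 := h0 j (Finset.mem_cons_self _ _)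
    have haj1 := h1 j (Finset.mem_cons_self _ _)
    nlinarith

private lemma coord_le (p q : ℝ) (hp0 : 0 ≤ p) (hp1 : p ≤ 1) (hq0 : 0 < q)
    (hq1 : q ≤ 1 / 2) :
    1 - (Real.sqrt (p * q) + Real.sqrt ((1 - p) * (1 - q))) ≤ (p - q) ^ 2 / q := by
  have hq0' : (0:ℝ) ≤ q := le_of_lt hq0
  have h1p : (0:ℝ) ≤ 1 - p := by linarith
  have h1q : (0:ℝ) ≤ 1 - q := by linarith
  set a := Real.sqrt p with ha'
  set b := Real.sqrt q with hb'
  set c := Real.sqrt (1 - p) with hc'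
  set d := Real.sqrt (1 - q) with hd'
  have ha : a ^ 2 = p := Real.sq_sqrt hp0
  have hb : b ^ 2 = q := Real.sq_sqrt hq0'
  have hc : c ^ 2 = 1 - p := Real.sq_sqrt h1p
  have hd : d ^ 2 = 1 - q := Real.sq_sqrt h1q
  have ha0 : 0 ≤ a := Real.sqrt_nonneg _
  have hb0 : 0 ≤ b := Real.sqrt_nonneg _
  have hc0 : 0 ≤ c := Real.sqrt_nonneg _
  have hd0 : 0 ≤ d := Real.sqrt_nonneg _
  have h1 : Real.sqrt (p * q) = a * b := Real.sqrt_mul hp0 q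
  have h2 : Real.sqrt ((1 - p) * (1 - q)) = c * d := Real.sqrt_mul h1p (1 - q)
  rw [h1, h2, le_div_iff₀ hq0]
  -- key inequalities
  have key1 : (a - b) ^ 2 * q ≤ (p - q) ^ 2 := by
    have hpq : (p - q) ^ 2 = (a - b) ^ 2 * (a + b) ^ 2 := by
      rw [← ha, ← hb]; ring
    rw [hpq]
    have : q ≤ (a + b) ^ 2 := by nlinarith
    exact mul_le_mul_of_nonneg_left this (sq_nonneg _)
  have key2 : (c - d) ^ 2 * (1 - q) ≤ (p - q) ^ 2 := by
    have hpq : (p - q) ^ 2 = (c - d) ^ 2 * (c + d) ^ 2 := by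
      have hcd : p - q = -(c ^ 2 - d ^ 2) := by rw [hc, hd]; ring
      rw [hcd]; ring
    rw [hpq]
    have : 1 - q ≤ (c + d) ^ 2 := by nlinarith
    exact mul_le_mul_of_nonneg_left this (sq_nonneg _)
  have key3 : (c - d) ^ 2 * q ≤ (c - d) ^ 2 * (1 - q) := by
    have : q ≤ 1 - q := by linarith
    exact mul_le_mul_of_nonneg_left this (sq_nonneg _)
  -- 2*(1 - (a*b + c*d)) = (a-b)^2 + (c-d)^2
  have hident : 2 * (1 - (a * b + c * d)) = (a - b) ^ 2 + (c - d) ^ 2 := by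
    nlinarith [ha, hb, hc, hd]
  have hgoal : (1 - (a * b + c * d)) * q = ((a - b) ^ 2 * q + (c - d) ^ 2 * q) / 2 := by
    linear_combination (q / 2) * hident
  rw [hgoal]
  linarith [key1, key2, key3]

private lemma sum_prod_bool {n : ℕ} (f : Fin n → Bool → ℝ) :
    ∑ x : Fin n → Bool, ∏ i, f i (x i) = ∏ i, (f i true + f i false) := by
  rw [Fintype.prod_sum f |>.symm]
  simp

private lemma sqrt_prod {ι : Type*} (s : Finset ι) (g : ι → ℝ)
    (h : ∀ i ∈ s, 0 ≤ g i) :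
    Real.sqrt (∏ i ∈ s, g i) = ∏ i ∈ s, Real.sqrt (g i) := by
  induction s using Finset.cons_induction with
  | empty => simp
  | cons j s hj ih =>
    rw [Finset.prod_cons, Finset.prod_cons,
      Real.sqrt_mul (h j (Finset.mem_cons_self _ _)),
      ih (fun i hi => h i (Finset.mem_cons_of_mem hi))]

/-- **Total variation lower bound implies a χ²-type bound for product distributions
over the hypercube.** If `P` and `Q` are product distributions over `{0,1}ⁿ` with
coordinate Bernoulli expectations `p i ∈ [0,1]` and `q i ∈ (0, 1/2]`, and the total
variation distance satisfies `δ(P,Q) ≥ ε` (for `ε ≥ 0`), then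
`∑ i, (p i - q i)² / q i ≥ ε²/2`. -/
theorem chiSq_ge_of_tvDist_ge (n : ℕ) (p q : Fin n → ℝ)
    (hp : ∀ i, 0 ≤ p i ∧ p i ≤ 1)
    (hq : ∀ i, 0 < q i ∧ q i ≤ 1 / 2)
    (ε : ℝ) (hε : 0 ≤ ε)
    (h : tvDist (prodBern p) (prodBern q) ≥ ε) :
    ∑ i, (p i - q i) ^ 2 / q i ≥ ε ^ 2 / 2 := by
  set P := prodBern p with hP'
  set Q := prodBern q with hQ'
  have hPx : ∀ x, 0 ≤ P x := by
    intro x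
    exact Finset.prod_nonneg fun i _ => by
      by_cases hxi : x i <;> simp [hP', prodBern, hxi] <;>
        [exact (hp i).1; linarith [(hp i).2]]
  have hQx : ∀ x, 0 ≤ Q x := by
    intro x
    exact Finset.prod_nonneg fun i _ => by
      by_cases hxi : x i <;> simp [hQ', prodBern, hxi] <;>
        [exact le_of_lt (hq i).1; linarith [(hq i).2]]
  -- sums equal one
  have hPsum : ∑ x, P x = 1 := by
    simp only [hP', prodBern]
    rw [sum_prod_bool (fun i b => if b then p i else 1 - p i)]
    simp
  have hQsum : ∑ x, Q x = 1 := by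
    simp only [hQ', prodBern]
    rw [sum_prod_bool (fun i b => if b then q i else 1 - q i)]
    simp
  -- Bhattacharyya coefficient
  set BC := fun i => Real.sqrt (p i * q i) + Real.sqrt ((1 - p i) * (1 - q i)) with hBC'
  have hBC0 : ∀ i, 0 ≤ BC i := fun i =>
    add_nonneg (Real.sqrt_nonneg _) (Real.sqrt_nonneg _)
  have hBC1 : ∀ i, BC i ≤ 1 := by
    intro i
    have h1 : Real.sqrt (p i * q i) ≤ (p i + q i) / 2 := by
      rw [show (p i + q i) / 2 = Real.sqrt (((p i + q i) / 2) ^ 2) from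
        (Real.sqrt_sq (by linarith [(hp i).1, (hq i).1.le])).symm]
      exact Real.sqrt_le_sqrt (by nlinarith [sq_nonneg (p i - q i)])
    have h2 : Real.sqrt ((1 - p i) * (1 - q i)) ≤ ((1 - p i) + (1 - q i)) / 2 := by
      rw [show ((1 - p i) + (1 - q i)) / 2 = Real.sqrt ((((1 - p i) + (1 - q i)) / 2) ^ 2) from
        (Real.sqrt_sq (by linarith [(hp i).2, (hq i).2])).symm]
      exact Real.sqrt_le_sqrt (by nlinarith [sq_nonneg (p i - q i)])
    show Real.sqrt (p i * q i) + Real.sqrt ((1 - p i) * (1 - q i)) ≤ 1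
    linarith
  -- factorization of the Bhattacharyya sum
  have hfact : ∑ x, Real.sqrt (P x * Q x) = ∏ i, BC i := by
    have step : ∀ x : Fin n → Bool, Real.sqrt (P x * Q x) =
        ∏ i, Real.sqrt ((if x i then p i else 1 - p i) * (if x i then q i else 1 - q i)) := by
      intro x
      have hPQ : P x * Q x =
          ∏ i, ((if x i then p i else 1 - p i) * (if x i then q i else 1 - q i)) := by
        simp only [hP', hQ', prodBern]
        exact Finset.prod_mul_distrib.symm
      rw [hPQ]
      exact sqrt_prod _ _ fun i _ => by
        by_cases hxi : x i <;> simp [hxi] <;>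
          [exact mul_nonneg (hp i).1 (hq i).1.le;
           exact mul_nonneg (by linarith [(hp i).2]) (by linarith [(hq i).2])]
    calc ∑ x, Real.sqrt (P x * Q x)
        = ∑ x : Fin n → Bool, ∏ i,
            Real.sqrt ((if x i then p i else 1 - p i) * (if x i then q i else 1 - q i)) := by
          exact Finset.sum_congr rfl fun x _ => step x
      _ = ∏ i, (Real.sqrt (p i * q i) + Real.sqrt ((1 - p i) * (1 - q i))) := by
          rw [sum_prod_bool (fun i b =>
            Real.sqrt ((if b then p i else 1 - p i) * (if b then q i else 1 - q i)))]
          simp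
      _ = ∏ i, BC i := rfl
  set S := ∑ x, Real.sqrt (P x * Q x) with hS'
  have hS1 : S ≤ 1 := by
    rw [hfact]
    exact Finset.prod_le_one (fun i _ => hBC0 i) (fun i _ => hBC1 i)
  -- Cauchy–Schwarz step: δ² ≤ 2(1 - S)
  have habs : ∀ x, |P x - Q x| = |Real.sqrt (P x) - Real.sqrt (Q x)|
      * (Real.sqrt (P x) + Real.sqrt (Q x)) := by
    intro x
    have h1 : P x - Q x = (Real.sqrt (P x) - Real.sqrt (Q x))
        * (Real.sqrt (P x) + Real.sqrt (Q x)) := by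
      have := Real.sq_sqrt (hPx x); have := Real.sq_sqrt (hQx x); nlinarith
    rw [h1, abs_mul, abs_of_nonneg (add_nonneg (Real.sqrt_nonneg _) (Real.sqrt_nonneg _))]
  have hCS := Finset.sum_mul_sq_le_sq_mul_sq Finset.univ
    (fun x : Fin n → Bool => |Real.sqrt (P x) - Real.sqrt (Q x)|)
    (fun x => Real.sqrt (P x) + Real.sqrt (Q x))
  have hsq1 : ∑ x : Fin n → Bool, |Real.sqrt (P x) - Real.sqrt (Q x)| ^ 2 = 2 - 2 * S := by
    have : ∀ x : Fin n → Bool, |Real.sqrt (P x) - Real.sqrt (Q x)| ^ 2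
        = P x + Q x - 2 * Real.sqrt (P x * Q x) := by
      intro x
      rw [sq_abs, Real.sqrt_mul (hPx x)]
      have := Real.sq_sqrt (hPx x); have := Real.sq_sqrt (hQx x); nlinarith
    rw [Finset.sum_congr rfl fun x _ => this x]
    rw [Finset.sum_sub_distrib, Finset.sum_add_distrib, hPsum, hQsum, ← Finset.mul_sum, ← hS']
    ring
  have hsq2 : ∑ x : Fin n → Bool, (Real.sqrt (P x) + Real.sqrt (Q x)) ^ 2 = 2 + 2 * S := by
    have : ∀ x : Fin n → Bool, (Real.sqrt (P x) + Real.sqrt (Q x)) ^ 2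
        = P x + Q x + 2 * Real.sqrt (P x * Q x) := by
      intro x
      rw [Real.sqrt_mul (hPx x)]
      have := Real.sq_sqrt (hPx x); have := Real.sq_sqrt (hQx x); nlinarith
    rw [Finset.sum_congr rfl fun x _ => this x]
    rw [Finset.sum_add_distrib, Finset.sum_add_distrib, hPsum, hQsum, ← Finset.mul_sum, ← hS']
    ring
  have hTV : tvDist P Q = (1 / 2) * ∑ x : Fin n → Bool,
      |Real.sqrt (P x) - Real.sqrt (Q x)| * (Real.sqrt (P x) + Real.sqrt (Q x)) := by
    rw [tvDist]
    congr 1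
    exact Finset.sum_congr rfl fun x _ => habs x
  have hδ2 : (tvDist P Q) ^ 2 ≤ 2 * (1 - S) := by
    rw [hTV, mul_pow]
    have := hCS
    rw [hsq1, hsq2] at this
    nlinarith [hS1, this]
  -- per-coordinate bound and conclusion
  have hcoordsum : 1 - S ≤ ∑ i, (p i - q i) ^ 2 / q i := by
    rw [hfact]
    calc 1 - ∏ i, BC i ≤ ∑ i, (1 - BC i) :=
          one_sub_prod_le_sum Finset.univ BC (fun i _ => hBC0 i) (fun i _ => hBC1 i)
      _ ≤ ∑ i, (p i - q i) ^ 2 / q i := by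
          refine Finset.sum_le_sum fun i _ => ?_
          exact coord_le (p i) (q i) (hp i).1 (hp i).2 (hq i).1 (hq i).2
  have hε2 : ε ^ 2 ≤ (tvDist P Q) ^ 2 := by
    have := h
    nlinarith
  linarith
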